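/- Fix an outcome ô ∈ {Reject, Accept}^N. Let D ⊆ C_ô, let F ⊆ ℝ^N be a set with F ∩ C = p_ô + D, and set G = p_ô + R(D). Then ∂G ∩ Y_ô ⊆ ∂F ∩ Y_ô. -/

import Mathlib

open MeasureTheory
open scoped ENNReal

/-- Possible outcomes of a test on a single coin. -/
inductive Outcome : Type
  | Reject : Outcome
  | Accept : Outcome
deriving DecidableEq

/-- The cube `C = [p₀, q₀]^N ⊆ ℝ^N`. -/
def cube (N : ℕ) (p₀ q₀ : ℝ) : Set (EuclideanSpace ℝ (Fin N)) :=
  {x | ∀ i, x i ∈ Set.Icc p₀ q₀}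

/-- The corner `p_ô` of the cube `[p₀, q₀]^N` associated with the outcome vector `ô`:
`(p_ô)ᵢ = p₀` if `ôᵢ = Reject` and `(p_ô)ᵢ = q₀` if `ôᵢ = Accept`. -/
noncomputable def corner {N : ℕ} (p₀ q₀ : ℝ) (o : Fin N → Outcome) :
    EuclideanSpace ℝ (Fin N) :=
  WithLp.toLp 2 (fun i => if o i = Outcome.Accept then q₀ else p₀)

/-- The box `C_ô = ∏ᵢ Jᵢ` with `Jᵢ = [0, ε]` if `ôᵢ = Reject` and `Jᵢ = [−ε, 0]` if
`ôᵢ = Accept`, where `ε = q₀ − p₀`; it satisfies `C = p_ô + C_ô`. -/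
def cornerBox {N : ℕ} (p₀ q₀ : ℝ) (o : Fin N → Outcome) :
    Set (EuclideanSpace ℝ (Fin N)) :=
  {x | ∀ i, if o i = Outcome.Accept then x i ∈ Set.Icc (-(q₀ - p₀)) 0
    else x i ∈ Set.Icc 0 (q₀ - p₀)}

/-- `Y_ô`: a point `p` of `∂C` *agrees* with the outcome `ô` if there is no coordinate `i` with
(`pᵢ = p₀` and `ôᵢ = Accept`) or (`pᵢ = q₀` and `ôᵢ = Reject`). -/
def agreeSet {N : ℕ} (p₀ q₀ : ℝ) (o : Fin N → Outcome) :
    Set (EuclideanSpace ℝ (Fin N)) :=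
  {p | p ∈ frontier (cube N p₀ q₀) ∧
    ∀ i, ¬((p i = p₀ ∧ o i = Outcome.Accept) ∨ (p i = q₀ ∧ o i = Outcome.Reject))}

/-- The real sign `±1` associated to a Boolean. -/
noncomputable def sgn (b : Bool) : ℝ := if b then 1 else -1

/-- The reflection `R(S; σ) = {σ ∗ x : x ∈ S}` of a set `S ⊆ ℝ^N` by a sign vector `σ`,
where `∗` denotes componentwise multiplication. -/
noncomputable def reflectSet {N : ℕ} (σ : Fin N → Bool)
    (S : Set (EuclideanSpace ℝ (Fin N))) : Set (EuclideanSpace ℝ (Fin N)) :=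
  (fun x => (WithLp.toLp 2 (fun i => sgn (σ i) * x i) : EuclideanSpace ℝ (Fin N))) '' S

/-- The union `R(S) = ⋃_σ R(S; σ)` of all `2^N` coordinate reflections of `S`. -/
noncomputable def reflectAll {N : ℕ} (S : Set (EuclideanSpace ℝ (Fin N))) :
    Set (EuclideanSpace ℝ (Fin N)) :=
  ⋃ σ : Fin N → Bool, reflectSet σ S

/-- The translate `v + S` of a set `S ⊆ ℝ^N`. -/
def translateSet {N : ℕ} (v : EuclideanSpace ℝ (Fin N))
    (S : Set (EuclideanSpace ℝ (Fin N))) : Set (EuclideanSpace ℝ (Fin N)) :=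
  (fun x => v + x) '' S

/-!
Let `Φ` fold `ℝ^N` onto the orthant of `p_ô + C_ô`, replacing each coordinate of `x - p_ô` by its
absolute value carrying the sign of `C_ô`. Then `Φ` is continuous, fixes `C`, and
`G = Φ⁻¹(p_ô + D)`. Near a point `y ∈ Y_ô` every coordinate of `y - p_ô` is strictly smaller
than `ε` in absolute value, so `Φ` maps a neighbourhood of `y` into `C`, where `F` and `p_ô + D`
coincide. Hence `Φ` carries `G` into `F` and, near `y`, `Gᶜ` into `Fᶜ`; as `Φ y = y`, closure
points of `G` and of `Gᶜ` at `y` become closure points of `F` and of `Fᶜ`.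
-/

theorem mem_closure_of_eventually_mapsTo {X Y : Type*} [TopologicalSpace X] [TopologicalSpace Y]
    {f : X → Y} {s : Set X} {t : Set Y} {x : X} (hf : ContinuousAt f x) (hx : x ∈ closure s)
    (hst : ∀ᶠ x' in nhds x, x' ∈ s → f x' ∈ t) : f x ∈ closure t := by
  have := mem_closure_iff_nhdsWithin_neBot.1 hx
  exact mem_closure_of_tendsto (hf.tendsto.mono_left nhdsWithin_le_nhds)
    (eventually_nhdsWithin_iff.2 hst)

section Fold

variable {N : ℕ}

noncomputable def boxSign (o : Fin N → Outcome) (i : Fin N) : ℝ :=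
  if o i = Outcome.Accept then -1 else 1

theorem abs_boxSign (o : Fin N → Outcome) (i : Fin N) : |boxSign o i| = 1 := by
  unfold boxSign; split <;> norm_num

theorem boxSign_mul_abs_of_nonneg {o : Fin N → Outcome} {i : Fin N} {t : ℝ}
    (h : 0 ≤ boxSign o i * t) : boxSign o i * |t| = t := by
  unfold boxSign at h ⊢
  by_cases ho : o i = Outcome.Accept <;> simp only [ho, if_true, if_false] at h ⊢
  · rw [abs_of_nonpos (by linarith)]; ring
  · rw [abs_of_nonneg (by linarith)]; ring

theorem boxSign_mul_nonneg_of_mem_cornerBox {p₀ q₀ : ℝ} {o : Fin N → Outcome}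
    {x : EuclideanSpace ℝ (Fin N)} (hx : x ∈ cornerBox p₀ q₀ o) (i : Fin N) :
    0 ≤ boxSign o i * x i := by
  have hxi := hx i
  unfold boxSign
  split at hxi <;> rename_i h <;> simp only [h, if_true, if_false]
  · linarith [hxi.2]
  · linarith [hxi.1]

noncomputable def fold (o : Fin N → Outcome) (x : EuclideanSpace ℝ (Fin N)) :
    EuclideanSpace ℝ (Fin N) :=
  WithLp.toLp 2 (fun i => boxSign o i * |x i|)

theorem continuous_fold (o : Fin N → Outcome) : Continuous (fold o) :=
  PiLp.continuous_toLp 2 _ |>.comp <| continuous_pi fun i =>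
    continuous_const.mul (PiLp.continuous_apply 2 _ i).abs

theorem fold_eq_self {o : Fin N → Outcome} {x : EuclideanSpace ℝ (Fin N)}
    (h : ∀ i, 0 ≤ boxSign o i * x i) : fold o x = x := by
  ext i
  exact boxSign_mul_abs_of_nonneg (h i)

theorem fold_reflect (o : Fin N → Outcome) (σ : Fin N → Bool) (x : EuclideanSpace ℝ (Fin N)) :
    fold o (WithLp.toLp 2 (fun i => sgn (σ i) * x i)) = fold o x := by
  ext i
  have : |sgn (σ i)| = 1 := by unfold sgn; split <;> norm_num
  simp only [fold, PiLp.toLp_apply, abs_mul, this, one_mul]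

theorem exists_reflect_fold_eq (o : Fin N → Outcome) (x : EuclideanSpace ℝ (Fin N)) :
    ∃ σ : Fin N → Bool, WithLp.toLp 2 (fun i => sgn (σ i) * fold o x i) = x := by
  refine ⟨fun i => decide (0 ≤ x i) == decide (o i ≠ Outcome.Accept), ?_⟩
  ext i
  simp only [fold, PiLp.toLp_apply, sgn, boxSign]
  by_cases hx : 0 ≤ x i <;> by_cases ho : o i = Outcome.Accept <;>
    simp [hx, ho, abs_of_nonneg, abs_of_neg, lt_of_not_ge]

theorem mem_reflectAll_iff {p₀ q₀ : ℝ} {o : Fin N → Outcome}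
    {D : Set (EuclideanSpace ℝ (Fin N))} (hD : D ⊆ cornerBox p₀ q₀ o)
    {x : EuclideanSpace ℝ (Fin N)} : x ∈ reflectAll D ↔ fold o x ∈ D := by
  constructor
  · intro hx
    obtain ⟨σ, d, hd, rfl⟩ := Set.mem_iUnion.1 hx
    rwa [fold_reflect, fold_eq_self (boxSign_mul_nonneg_of_mem_cornerBox (hD hd))]
  · intro h
    obtain ⟨σ, hσ⟩ := exists_reflect_fold_eq o x
    exact Set.mem_iUnion.2 ⟨σ, fold o x, h, hσ⟩

theorem mem_translateSet_iff {v y : EuclideanSpace ℝ (Fin N)}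
    {S : Set (EuclideanSpace ℝ (Fin N))} : y ∈ translateSet v S ↔ y - v ∈ S := by
  constructor
  · rintro ⟨x, hx, rfl⟩
    simpa using hx
  · intro h
    exact ⟨y - v, h, add_sub_cancel v y⟩

/-- The map `Φ`: folding about the corner `p_ô`. -/
noncomputable def cornerFold (p₀ q₀ : ℝ) (o : Fin N → Outcome) (x : EuclideanSpace ℝ (Fin N)) :
    EuclideanSpace ℝ (Fin N) :=
  corner p₀ q₀ o + fold o (x - corner p₀ q₀ o)

variable {p₀ q₀ : ℝ} {o : Fin N → Outcome}

theorem continuous_cornerFold : Continuous (cornerFold p₀ q₀ o) :=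
  continuous_const.add ((continuous_fold o).comp (continuous_id.sub continuous_const))

theorem mem_translate_reflectAll_iff {D : Set (EuclideanSpace ℝ (Fin N))}
    (hD : D ⊆ cornerBox p₀ q₀ o) {x : EuclideanSpace ℝ (Fin N)} :
    x ∈ translateSet (corner p₀ q₀ o) (reflectAll D) ↔
      cornerFold p₀ q₀ o x ∈ translateSet (corner p₀ q₀ o) D := by
  rw [mem_translateSet_iff, mem_translateSet_iff, mem_reflectAll_iff hD, cornerFold,
    add_sub_cancel_left]

theorem isClosed_cube : IsClosed (cube N p₀ q₀) := by
  have : cube N p₀ q₀ = ⋂ i, (fun x : EuclideanSpace ℝ (Fin N) => x i) ⁻¹' Set.Icc p₀ q₀ := by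
    ext x; simp [cube]
  rw [this]
  exact isClosed_iInter fun i => isClosed_Icc.preimage (PiLp.continuous_apply 2 _ i)

theorem cornerFold_eq_self {y : EuclideanSpace ℝ (Fin N)} (hy : y ∈ cube N p₀ q₀) :
    cornerFold p₀ q₀ o y = y := by
  rw [cornerFold, fold_eq_self, add_sub_cancel]
  intro i
  have hyi := hy i
  simp only [boxSign, corner, PiLp.sub_apply]
  split
  · linarith [hyi.2]
  · linarith [hyi.1]

theorem cornerFold_mem_cube {x : EuclideanSpace ℝ (Fin N)}
    (hx : ∀ i, |x i - corner p₀ q₀ o i| ≤ q₀ - p₀) : cornerFold p₀ q₀ o x ∈ cube N p₀ q₀ := by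
  intro i
  have hxi := hx i
  have h0 := abs_nonneg (x i - corner p₀ q₀ o i)
  simp only [cornerFold, fold, boxSign, corner, PiLp.add_apply, PiLp.sub_apply,
    PiLp.toLp_apply] at hxi h0 ⊢
  by_cases ho : o i = Outcome.Accept <;> simp only [ho, if_true, if_false] at hxi h0 ⊢ <;>
    constructor <;> linarith

theorem abs_sub_corner_lt_of_mem_agreeSet {y : EuclideanSpace ℝ (Fin N)}
    (hy : y ∈ agreeSet p₀ q₀ o) (i : Fin N) : |y i - corner p₀ q₀ o i| < q₀ - p₀ := by
  have hyi := isClosed_cube.closure_subset (frontier_subset_closure hy.1) i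
  have hag := hy.2 i
  simp only [corner, PiLp.toLp_apply]
  rw [abs_sub_lt_iff]
  cases ho : o i
  · have hlt : y i < q₀ := lt_of_le_of_ne hyi.2 fun h => hag (Or.inr ⟨h, ho⟩)
    simp only [reduceCtorEq, if_false]
    constructor <;> linarith [hyi.1]
  · have hgt : p₀ < y i := lt_of_le_of_ne hyi.1 fun h => hag (Or.inl ⟨h.symm, ho⟩)
    simp only [if_true]
    constructor <;> linarith [hyi.2]

theorem eventually_cornerFold_mem_cube {y : EuclideanSpace ℝ (Fin N)}
    (hy : y ∈ agreeSet p₀ q₀ o) : ∀ᶠ x in nhds y, cornerFold p₀ q₀ o x ∈ cube N p₀ q₀ := by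
  have hlt : ∀ i, ∀ᶠ x in nhds y, |x i - corner p₀ q₀ o i| < q₀ - p₀ := fun i =>
    (((PiLp.continuous_apply 2 _ i).sub continuous_const).abs.continuousAt).eventually_lt
      continuousAt_const (abs_sub_corner_lt_of_mem_agreeSet hy i)
  exact (Filter.eventually_all.2 hlt).mono fun x hx => cornerFold_mem_cube fun i => (hx i).le

end Fold

theorem stmt_8_general {N : ℕ} (p₀ q₀ : ℝ)
    (o : Fin N → Outcome) (D : Set (EuclideanSpace ℝ (Fin N)))
    (hD : D ⊆ cornerBox p₀ q₀ o)
    (F : Set (EuclideanSpace ℝ (Fin N)))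
    (hF : F ∩ cube N p₀ q₀ = translateSet (corner p₀ q₀ o) D) :
    frontier (translateSet (corner p₀ q₀ o) (reflectAll D)) ∩ agreeSet p₀ q₀ o ⊆
      frontier F ∩ agreeSet p₀ q₀ o := by
  rintro y ⟨hyG, hyY⟩
  refine ⟨?_, hyY⟩
  have hfix : cornerFold p₀ q₀ o y = y :=
    cornerFold_eq_self (isClosed_cube.closure_subset (frontier_subset_closure hyY.1))
  have hcont : ContinuousAt (cornerFold p₀ q₀ o) y := continuous_cornerFold.continuousAt
  have hDF : translateSet (corner p₀ q₀ o) D ⊆ F := hF ▸ Set.inter_subset_left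
  rw [frontier_eq_closure_inter_closure] at hyG ⊢
  constructor
  · exact hfix ▸ mem_closure_of_eventually_mapsTo hcont hyG.1
      (.of_forall fun x hx => hDF ((mem_translate_reflectAll_iff hD).1 hx))
  · refine hfix ▸ mem_closure_of_eventually_mapsTo hcont hyG.2 <|
      (eventually_cornerFold_mem_cube hyY).mono fun x hxC hx hxF => hx ?_
    exact (mem_translate_reflectAll_iff hD).2 (hF ▸ ⟨hxF, hxC⟩)

/-- **Boundary of the reflected set on the agreeing boundary.**
For an outcome `ô`, a subset `D ⊆ C_ô`, a set `F` with `F ∩ C = p_ô + D`, and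
`G = p_ô + R(D)`, we have `∂G ∩ Y_ô ⊆ ∂F ∩ Y_ô`. -/
theorem stmt_8 {N : ℕ} (hN : 1 ≤ N) (p₀ q₀ : ℝ) (hpq : p₀ < q₀)
    (o : Fin N → Outcome) (D : Set (EuclideanSpace ℝ (Fin N)))
    (hD : D ⊆ cornerBox p₀ q₀ o)
    (F : Set (EuclideanSpace ℝ (Fin N)))
    (hF : F ∩ cube N p₀ q₀ = translateSet (corner p₀ q₀ o) D) :
    frontier (translateSet (corner p₀ q₀ o) (reflectAll D)) ∩ agreeSet p₀ q₀ o ⊆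
      frontier F ∩ agreeSet p₀ q₀ o :=
  stmt_8_general p₀ q₀ o D hD F hF
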